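/- Let L > 0, T > 0 and fix feedback gains α, β with 0 < |α| < 1 and β > 0. Set C := min{(1−α²)/2, β} > 0. For every classical solution u of the closed-loop linear KP-II system on [0,L]² × [0,T], the energy E is non-increasing on [0,T] and for every t ∈ (0,T) it satisfies E′(t) ≤ −C [ ∫₀^L u_x(0,y,t)² dy + ∫₀^L u(x,L,t)² dx + ∫₀^L ((∂ₓ⁻¹ u_y)(0,y,t))² dy ]. -/

import Mathlib

open MeasureTheory Real

noncomputable section

/-- Partial derivative in `x` of `u(x,y,t)`. -/
def pdx (u : ℝ → ℝ → ℝ → ℝ) (x y t : ℝ) : ℝ := deriv (fun x' => u x' y t) x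

/-- Third partial derivative in `x` of `u(x,y,t)`. -/
def pdx3 (u : ℝ → ℝ → ℝ → ℝ) (x y t : ℝ) : ℝ := iteratedDeriv 3 (fun x' => u x' y t) x

/-- Partial derivative in `y` of `u(x,y,t)`. -/
def pdy (u : ℝ → ℝ → ℝ → ℝ) (x y t : ℝ) : ℝ := deriv (fun y' => u x y' t) y

/-- Second partial derivative in `y` of `u(x,y,t)`. -/
def pdy2 (u : ℝ → ℝ → ℝ → ℝ) (x y t : ℝ) : ℝ := iteratedDeriv 2 (fun y' => u x y' t) y

/-- Partial derivative in `t` of `u(x,y,t)`. -/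
def pdt (u : ℝ → ℝ → ℝ → ℝ) (x y t : ℝ) : ℝ := deriv (fun t' => u x y t') t

/-- The nonlocal operator `(∂ₓ⁻¹ w)(x,y) = -∫ₓ^L w(s,y) ds`. -/
def pxInv (L : ℝ) (w : ℝ → ℝ → ℝ) (x y : ℝ) : ℝ := -(∫ s in x..L, w s y)

/-- A classical solution of the closed-loop linear KP-II system on `[0,L]² × [0,T]`:
`u` is `C³`, satisfies `u_t + u_x + u_xxx + ∂ₓ⁻¹ u_yy = 0` on `Ω × (0,T)` and the
boundary feedback conditions for all `t ∈ [0,T]`. -/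
def IsKPSolution (L T α β : ℝ) (u : ℝ → ℝ → ℝ → ℝ) : Prop :=
  ContDiff ℝ 3 (fun p : ℝ × ℝ × ℝ => u p.1 p.2.1 p.2.2) ∧
  (∀ x ∈ Set.Ioo (0:ℝ) L, ∀ y ∈ Set.Ioo (0:ℝ) L, ∀ t ∈ Set.Ioo (0:ℝ) T,
      pdt u x y t + pdx u x y t + pdx3 u x y t
        + pxInv L (fun s y' => pdy2 u s y' t) x y = 0) ∧
  (∀ y ∈ Set.Icc (0:ℝ) L, ∀ t ∈ Set.Icc (0:ℝ) T,
      u 0 y t = 0 ∧ u L y t = 0 ∧ pdx u L y t = α * pdx u 0 y t) ∧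
  (∀ x ∈ Set.Icc (0:ℝ) L, ∀ t ∈ Set.Icc (0:ℝ) T,
      pdy u x L t = β * pdx u x L t ∧ pdy u x 0 t = 0)

/-- The energy `E(t) = ½ ∫_Ω u(x,y,t)² dx dy`. -/
def energy (L : ℝ) (u : ℝ → ℝ → ℝ → ℝ) (t : ℝ) : ℝ :=
  (1/2) * ∫ x in (0:ℝ)..L, ∫ y in (0:ℝ)..L, (u x y t)^2

/-! Differentiating under the integral, `E'(t) = ∫∫ u u_t`. Put `v = ∂ₓ⁻¹ u_y`, so
that `v_x = u_y` and `v_y = ∂ₓ⁻¹ u_yy`. By the equation, `u u_t` is minus the divergence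
of the flux `(u²/2 + u u_xx - u_x²/2 - v²/2, u v)`, so `E'(t)` is a boundary integral
over `∂Ω`. On the boundary `u = 0` for `x ∈ {0, L}`, `u_x(L, ·) = α u_x(0, ·)`,
`v(L, ·) = 0`, `v(·, 0) = 0` and `v(·, L) = β u(·, L)` (integrate `u_y = β u_x` along
`y = L`), which leaves
`E'(t) = -((1-α²)/2 ∫ u_x(0,y)² dy + β ∫ u(x,L)² dx + ½ ∫ v(0,y)² dy)`;
every coefficient is at least `min((1-α²)/2, β)` because `(1-α²)/2 ≤ ½`. -/

open intervalIntegral Set Function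

section Calculus

variable {E : Type*} [NormedAddCommGroup E] [NormedSpace ℝ E]

theorem intervalIntegral_integral_swap_of_continuous {f : ℝ → ℝ → E} (hf : Continuous ↿f)
    (a b c d : ℝ) :
    ∫ x in a..b, ∫ y in c..d, f x y = ∫ y in c..d, ∫ x in a..b, f x y := by
  simp_rw [intervalIntegral_eq_integral_uIoc, MeasureTheory.integral_smul]
  rw [integral_integral_swap, smul_comm]
  rw [Measure.prod_restrict]
  exact (hf.continuousOn.integrableOn_compact (isCompact_uIcc.prod isCompact_uIcc)).mono_set
    (prod_mono uIoc_subset_uIcc uIoc_subset_uIcc)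

theorem hasDerivAt_intervalIntegral_of_continuous [CompleteSpace E] {f f' : ℝ → ℝ → E}
    (hf : Continuous ↿f) (hf' : Continuous ↿f') (hd : ∀ s z, HasDerivAt (f s) (f' s z) z)
    (a b y : ℝ) :
    HasDerivAt (fun z => ∫ s in a..b, f s z) (∫ s in a..b, f' s y) y := by
  have hFTC : ∀ s z, f s z = f s 0 + ∫ τ in (0:ℝ)..z, f' s τ := fun s z => by
    rw [integral_eq_sub_of_hasDerivAt (fun τ _ => hd s τ)
      ((hf'.uncurry_left s).intervalIntegrable 0 z), add_sub_cancel]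
  have hrepr : (fun z => ∫ s in a..b, f s z) =
      fun z => (∫ s in a..b, f s 0) + ∫ τ in (0:ℝ)..z, ∫ s in a..b, f' s τ := by
    ext z
    simp_rw [hFTC _ z]
    rw [integral_add ((hf.uncurry_right 0).intervalIntegrable a b)
      ((continuous_parametric_intervalIntegral_of_continuous' hf' 0 z).intervalIntegrable a b),
      intervalIntegral_integral_swap_of_continuous hf']
  rw [hrepr]
  exact ((continuous_parametric_intervalIntegral_of_continuous' (f := fun τ s => f' s τ)
    (hf'.comp continuous_swap) a b).integral_hasStrictDerivAt 0 y).hasDerivAt.const_add _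

theorem integral2_divergence_of_continuous_partials [CompleteSpace E] {P Q p q : ℝ → ℝ → E}
    (hp : Continuous ↿p) (hq : Continuous ↿q) (hP : ∀ x y, HasDerivAt (P · y) (p x y) x)
    (hQ : ∀ x y, HasDerivAt (Q x) (q x y) y) (a b c d : ℝ) :
    ∫ x in a..b, ∫ y in c..d, (p x y + q x y) =
      (∫ y in c..d, (P b y - P a y)) + ∫ x in a..b, (Q x d - Q x c) := by
  have hp_x : ∀ y, ∫ x in a..b, p x y = P b y - P a y := fun y =>
    integral_eq_sub_of_hasDerivAt (fun x _ => hP x y) ((hp.uncurry_right y).intervalIntegrable a b)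
  have hq_y : ∀ x, ∫ y in c..d, q x y = Q x d - Q x c := fun x =>
    integral_eq_sub_of_hasDerivAt (fun y _ => hQ x y) ((hq.uncurry_left x).intervalIntegrable c d)
  calc ∫ x in a..b, ∫ y in c..d, (p x y + q x y)
      = ∫ x in a..b, ((∫ y in c..d, p x y) + ∫ y in c..d, q x y) := by
        refine integral_congr fun x _ => ?_
        exact integral_add ((hp.uncurry_left x).intervalIntegrable c d)
          ((hq.uncurry_left x).intervalIntegrable c d)
    _ = (∫ x in a..b, ∫ y in c..d, p x y) + ∫ x in a..b, ∫ y in c..d, q x y :=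
        integral_add
          ((continuous_parametric_intervalIntegral_of_continuous' hp c d).intervalIntegrable a b)
          ((continuous_parametric_intervalIntegral_of_continuous' hq c d).intervalIntegrable a b)
    _ = _ := by
        rw [intervalIntegral_integral_swap_of_continuous hp]
        simp only [hp_x, hq_y]

end Calculus

section PartialDerivatives

variable {u : ℝ → ℝ → ℝ → ℝ} {x y t : ℝ} {m n : WithTop ℕ∞}

theorem hasDerivAt_fderiv_apply_x (hu : DifferentiableAt ℝ ↿u (x, y, t)) :
    HasDerivAt (fun x' => u x' y t) (fderiv ℝ ↿u (x, y, t) (1, 0, 0)) x :=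
  hu.hasFDerivAt.comp_hasDerivAt (f := fun x' : ℝ => (x', y, t)) x
    ((hasDerivAt_id x).prodMk ((hasDerivAt_const x y).prodMk (hasDerivAt_const x t)))

theorem hasDerivAt_fderiv_apply_y (hu : DifferentiableAt ℝ ↿u (x, y, t)) :
    HasDerivAt (fun y' => u x y' t) (fderiv ℝ ↿u (x, y, t) (0, 1, 0)) y :=
  hu.hasFDerivAt.comp_hasDerivAt (f := fun y' : ℝ => (x, y', t)) y
    ((hasDerivAt_const y x).prodMk ((hasDerivAt_id y).prodMk (hasDerivAt_const y t)))

theorem hasDerivAt_fderiv_apply_t (hu : DifferentiableAt ℝ ↿u (x, y, t)) :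
    HasDerivAt (fun t' => u x y t') (fderiv ℝ ↿u (x, y, t) (0, 0, 1)) t :=
  hu.hasFDerivAt.comp_hasDerivAt (f := fun t' : ℝ => (x, y, t')) t
    ((hasDerivAt_const t x).prodMk ((hasDerivAt_const t y).prodMk (hasDerivAt_id t)))

theorem hasDerivAt_pdx (hu : DifferentiableAt ℝ ↿u (x, y, t)) :
    HasDerivAt (fun x' => u x' y t) (pdx u x y t) x :=
  (hasDerivAt_fderiv_apply_x hu).differentiableAt.hasDerivAt

theorem hasDerivAt_pdy (hu : DifferentiableAt ℝ ↿u (x, y, t)) :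
    HasDerivAt (fun y' => u x y' t) (pdy u x y t) y :=
  (hasDerivAt_fderiv_apply_y hu).differentiableAt.hasDerivAt

theorem hasDerivAt_pdt (hu : DifferentiableAt ℝ ↿u (x, y, t)) :
    HasDerivAt (fun t' => u x y t') (pdt u x y t) t :=
  (hasDerivAt_fderiv_apply_t hu).differentiableAt.hasDerivAt

theorem contDiff_pdx (hu : ContDiff ℝ n ↿u) (hmn : m + 1 ≤ n) :
    ContDiff ℝ m ↿(pdx u) := by
  have hd := hu.differentiable (by rintro rfl; simp at hmn)
  have : ↿(pdx u) = fun p => fderiv ℝ ↿u p (1, 0, 0) :=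
    funext fun p => (hasDerivAt_fderiv_apply_x (hd (p.1, p.2.1, p.2.2))).deriv
  exact this ▸ (hu.fderiv_right hmn).clm_apply contDiff_const

theorem contDiff_pdy (hu : ContDiff ℝ n ↿u) (hmn : m + 1 ≤ n) :
    ContDiff ℝ m ↿(pdy u) := by
  have hd := hu.differentiable (by rintro rfl; simp at hmn)
  have : ↿(pdy u) = fun p => fderiv ℝ ↿u p (0, 1, 0) :=
    funext fun p => (hasDerivAt_fderiv_apply_y (hd (p.1, p.2.1, p.2.2))).deriv
  exact this ▸ (hu.fderiv_right hmn).clm_apply contDiff_const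

theorem contDiff_pdt (hu : ContDiff ℝ n ↿u) (hmn : m + 1 ≤ n) :
    ContDiff ℝ m ↿(pdt u) := by
  have hd := hu.differentiable (by rintro rfl; simp at hmn)
  have : ↿(pdt u) = fun p => fderiv ℝ ↿u p (0, 0, 1) :=
    funext fun p => (hasDerivAt_fderiv_apply_t (hd (p.1, p.2.1, p.2.2))).deriv
  exact this ▸ (hu.fderiv_right hmn).clm_apply contDiff_const

theorem pdx3_eq : pdx3 u = pdx (pdx (pdx u)) := by
  ext x y t; simp [pdx3, pdx, iteratedDeriv_eq_iterate]

theorem pdy2_eq : pdy2 u = pdy (pdy u) := by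
  ext x y t; simp [pdy2, pdy, iteratedDeriv_eq_iterate]

end PartialDerivatives

section InverseDerivative

variable {L : ℝ} {w w' : ℝ → ℝ → ℝ}

theorem pxInv_self (y : ℝ) : pxInv L w L y = 0 := by
  simp [pxInv]

theorem pxInv_eq_integral (x y : ℝ) : pxInv L w x y = ∫ s in L..x, w s y := by
  rw [pxInv, integral_symm, neg_neg]

theorem continuous_pxInv (hw : Continuous ↿w) : Continuous ↿(pxInv L w) := by
  change Continuous fun p : ℝ × ℝ => pxInv L w p.1 p.2
  simp_rw [pxInv_eq_integral]
  exact continuous_parametric_intervalIntegral_of_continuous (μ := volume)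
    (f := fun p s => w s p.2) (by fun_prop) continuous_fst

theorem hasDerivAt_pxInv_fst (hw : Continuous ↿w) (x y : ℝ) :
    HasDerivAt (pxInv L w · y) (w x y) x := by
  simp_rw [pxInv_eq_integral]
  exact ((hw.uncurry_right y).integral_hasStrictDerivAt L x).hasDerivAt

theorem hasDerivAt_pxInv_snd (hw : Continuous ↿w) (hw' : Continuous ↿w')
    (hd : ∀ s z, HasDerivAt (w s) (w' s z) z) (x y : ℝ) :
    HasDerivAt (pxInv L w x) (pxInv L w' x y) y :=
  (hasDerivAt_intervalIntegral_of_continuous hw hw' hd x L y).neg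

end InverseDerivative

section KP

variable {L T α β t : ℝ} {u : ℝ → ℝ → ℝ → ℝ}

theorem continuous_pdx3 (hu : ContDiff ℝ 3 ↿u) : Continuous ↿(pdx3 u) := by
  have hux : ContDiff ℝ 2 ↿(pdx u) := contDiff_pdx hu (by norm_num)
  have huxx : ContDiff ℝ 1 ↿(pdx (pdx u)) := contDiff_pdx hux (by norm_num)
  exact pdx3_eq (u := u) ▸ (contDiff_pdx (m := 0) huxx (by norm_num)).continuous

theorem continuous_pdy2 (hu : ContDiff ℝ 2 ↿u) : Continuous ↿(pdy2 u) := by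
  have huy : ContDiff ℝ 1 ↿(pdy u) := contDiff_pdy hu (by norm_num)
  exact pdy2_eq (u := u) ▸ (contDiff_pdy (m := 0) huy (by norm_num)).continuous

theorem hasDerivAt_energy (hu : ContDiff ℝ 1 ↿u) (t : ℝ) :
    HasDerivAt (energy L u) (∫ x in 0..L, ∫ y in 0..L, u x y t * pdt u x y t) t := by
  have hcu : Continuous ↿u := hu.continuous
  have hcut : Continuous ↿(pdt u) := (contDiff_pdt (m := 0) hu (by norm_num)).continuous
  have hinner : ∀ x z, HasDerivAt (fun z => ∫ y in 0..L, u x y z ^ 2 / 2)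
      (∫ y in 0..L, u x y z * pdt u x y z) z := fun x z =>
    hasDerivAt_intervalIntegral_of_continuous (f := fun y z => u x y z ^ 2 / 2)
      (f' := fun y z => u x y z * pdt u x y z) (by fun_prop) (by fun_prop)
      (fun y z => (((hasDerivAt_pdt (hu.differentiable one_ne_zero _)).pow 2).div_const 2)
        |>.congr_deriv (by ring)) 0 L z
  have houter := hasDerivAt_intervalIntegral_of_continuous
    (f := fun x z => ∫ y in 0..L, u x y z ^ 2 / 2) (by fun_prop) (by fun_prop) hinner 0 L t
  have henergy : energy L u = fun z => ∫ x in 0..L, ∫ y in 0..L, u x y z ^ 2 / 2 := by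
    ext z
    simp only [energy, ← intervalIntegral.integral_const_mul, one_div_mul_eq_div]
  exact henergy ▸ houter

theorem IsKPSolution.pde_of_mem_Icc (hL : 0 < L) (hu : IsKPSolution L T α β u)
    (ht : t ∈ Ioo 0 T) {x y : ℝ} (hx : x ∈ Icc 0 L) (hy : y ∈ Icc 0 L) :
    pdt u x y t + pdx u x y t + pdx3 u x y t + pxInv L (fun s y' => pdy2 u s y' t) x y = 0 := by
  have cu_t : Continuous ↿(pdt u) := (contDiff_pdt (m := 0) hu.1 (by norm_num)).continuous
  have cu_x : Continuous ↿(pdx u) := (contDiff_pdx (m := 0) hu.1 (by norm_num)).continuous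
  have cu_xxx : Continuous ↿(pdx3 u) := continuous_pdx3 hu.1
  have cw : Continuous ↿(pxInv L (fun s y' => pdy2 u s y' t)) :=
    continuous_pxInv (by have := continuous_pdy2 (hu.1.of_le (by norm_num)); fun_prop)
  have hopen : EqOn (fun p : ℝ × ℝ => pdt u p.1 p.2 t + pdx u p.1 p.2 t + pdx3 u p.1 p.2 t
      + pxInv L (fun s y' => pdy2 u s y' t) p.1 p.2) 0 (Ioo 0 L ×ˢ Ioo 0 L) :=
    fun p hp => hu.2.1 p.1 hp.1 p.2 hp.2 t ht
  have hclosed := hopen.closure (by fun_prop) continuous_const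
  rw [closure_prod_eq, closure_Ioo hL.ne] at hclosed
  exact hclosed (mk_mem_prod hx hy)

theorem continuous_pxInv_pdy (hu : ContDiff ℝ 1 ↿u) (t : ℝ) :
    Continuous ↿(pxInv L (fun s y' => pdy u s y' t)) := by
  have := (contDiff_pdy (m := 0) hu (by norm_num)).continuous
  exact continuous_pxInv (by fun_prop)

def kpFluxX (L : ℝ) (u : ℝ → ℝ → ℝ → ℝ) (t x y : ℝ) : ℝ :=
  u x y t ^ 2 / 2 + u x y t * pdx (pdx u) x y t - pdx u x y t ^ 2 / 2
    - pxInv L (fun s y' => pdy u s y' t) x y ^ 2 / 2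

def kpFluxY (L : ℝ) (u : ℝ → ℝ → ℝ → ℝ) (t x y : ℝ) : ℝ :=
  u x y t * pxInv L (fun s y' => pdy u s y' t) x y

theorem hasDerivAt_kpFluxX (hu : ContDiff ℝ 3 ↿u) (t x y : ℝ) :
    HasDerivAt (kpFluxX L u t · y)
      (u x y t * pdx u x y t + u x y t * pdx3 u x y t
        - pxInv L (fun s y' => pdy u s y' t) x y * pdy u x y t) x := by
  have hux : ContDiff ℝ 2 ↿(pdx u) := contDiff_pdx hu (by norm_num)
  have huxx : ContDiff ℝ 1 ↿(pdx (pdx u)) := contDiff_pdx hux (by norm_num)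
  have hu_x := hasDerivAt_pdx (x := x) (y := y) (t := t) (hu.differentiable (by norm_num) _)
  have hux_x := hasDerivAt_pdx (x := x) (y := y) (t := t) (hux.differentiable (by norm_num) _)
  have huxx_x := hasDerivAt_pdx (x := x) (y := y) (t := t) (huxx.differentiable (by norm_num) _)
  have hv_x : HasDerivAt (pxInv L (fun s y' => pdy u s y' t) · y) (pdy u x y t) x := by
    have := (contDiff_pdy (m := 0) hu (by norm_num)).continuous
    exact hasDerivAt_pxInv_fst (by fun_prop) x y
  refine ((((hu_x.pow 2).div_const 2).add (hu_x.mul huxx_x)).sub ((hux_x.pow 2).div_const 2)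
    |>.sub ((hv_x.pow 2).div_const 2)).congr_deriv ?_
  rw [pdx3_eq]
  ring

theorem hasDerivAt_kpFluxY (hu : ContDiff ℝ 2 ↿u) (t x y : ℝ) :
    HasDerivAt (kpFluxY L u t x)
      (pdy u x y t * pxInv L (fun s y' => pdy u s y' t) x y
        + u x y t * pxInv L (fun s y' => pdy2 u s y' t) x y) y := by
  have huy : ContDiff ℝ 1 ↿(pdy u) := contDiff_pdy hu (by norm_num)
  have cu_y := huy.continuous
  have cu_yy := continuous_pdy2 hu
  have hv_y := hasDerivAt_pxInv_snd (L := L) (x := x) (y := y)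
    (w := fun s y' => pdy u s y' t) (by fun_prop) (by fun_prop)
    fun s z => pdy2_eq (u := u) ▸ hasDerivAt_pdy (huy.differentiable (by norm_num) _)
  exact (hasDerivAt_pdy (hu.differentiable (by norm_num) _)).mul hv_y

theorem IsKPSolution.integral_integral_mul_pdt_eq_flux (hL : 0 < L) (hu : IsKPSolution L T α β u)
    (ht : t ∈ Ioo 0 T) :
    ∫ x in 0..L, ∫ y in 0..L, u x y t * pdt u x y t =
      -((∫ y in 0..L, (kpFluxX L u t L y - kpFluxX L u t 0 y))
        + ∫ x in 0..L, (kpFluxY L u t x L - kpFluxY L u t x 0)) := by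
  have h3 : ContDiff ℝ 3 ↿u := hu.1
  have cu := h3.continuous
  have cu_x := (contDiff_pdx (m := 0) h3 (by norm_num)).continuous
  have cu_y := (contDiff_pdy (m := 0) h3 (by norm_num)).continuous
  have cu_xxx := continuous_pdx3 h3
  have cv := continuous_pxInv_pdy (L := L) (h3.of_le (by norm_num)) t
  have cw : Continuous ↿(pxInv L (fun s y' => pdy2 u s y' t)) :=
    continuous_pxInv (by have := continuous_pdy2 (h3.of_le (by norm_num)); fun_prop)
  rw [← integral2_divergence_of_continuous_partials (by fun_prop) (by fun_prop)
      (hasDerivAt_kpFluxX h3 t) (hasDerivAt_kpFluxY (h3.of_le (by norm_num)) t),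
    ← intervalIntegral.integral_neg]
  refine integral_congr fun x hx => ?_
  rw [← intervalIntegral.integral_neg]
  refine integral_congr fun y hy => ?_
  rw [uIcc_of_le hL.le] at hx hy
  linear_combination u x y t * hu.pde_of_mem_Icc hL ht hx hy

theorem IsKPSolution.kpFluxX_right_sub_left (hu : IsKPSolution L T α β u) (ht : t ∈ Icc 0 T)
    {y : ℝ} (hy : y ∈ Icc 0 L) :
    kpFluxX L u t L y - kpFluxX L u t 0 y =
      (1 - α ^ 2) / 2 * pdx u 0 y t ^ 2 + pxInv L (fun s y' => pdy u s y' t) 0 y ^ 2 / 2 := by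
  obtain ⟨hu0, huL, hux⟩ := hu.2.2.1 y hy t ht
  simp only [kpFluxX, hu0, huL, hux, pxInv_self]
  ring

theorem IsKPSolution.pxInv_pdy_bottom (hu : IsKPSolution L T α β u) (ht : t ∈ Icc 0 T)
    {x : ℝ} (hx : x ∈ Icc 0 L) : pxInv L (fun s y' => pdy u s y' t) x 0 = 0 := by
  have hsub : uIcc x L ⊆ Icc 0 L := uIcc_subset_Icc hx (right_mem_Icc.2 (hx.1.trans hx.2))
  rw [pxInv, integral_congr fun s hs => (hu.2.2.2 s (hsub hs) t ht).2]
  simp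

theorem IsKPSolution.pxInv_pdy_top (hu : IsKPSolution L T α β u) (ht : t ∈ Icc 0 T)
    {x : ℝ} (hx : x ∈ Icc 0 L) : pxInv L (fun s y' => pdy u s y' t) x L = β * u x L t := by
  have hL : L ∈ Icc 0 L := right_mem_Icc.2 (hx.1.trans hx.2)
  have hsub : uIcc x L ⊆ Icc 0 L := uIcc_subset_Icc hx hL
  have hcu_x : Continuous ↿(pdx u) := (contDiff_pdx (m := 0) hu.1 (by norm_num)).continuous
  rw [pxInv, integral_congr fun s hs => (hu.2.2.2 s (hsub hs) t ht).1,
    intervalIntegral.integral_const_mul,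
    integral_eq_sub_of_hasDerivAt (fun s _ => hasDerivAt_pdx (hu.1.differentiable (by norm_num) _))
      (Continuous.intervalIntegrable (by fun_prop) _ _), (hu.2.2.1 L hL t ht).2.1]
  ring

theorem IsKPSolution.kpFluxY_top_sub_bottom (hu : IsKPSolution L T α β u) (ht : t ∈ Icc 0 T)
    {x : ℝ} (hx : x ∈ Icc 0 L) :
    kpFluxY L u t x L - kpFluxY L u t x 0 = β * u x L t ^ 2 := by
  rw [kpFluxY, kpFluxY, hu.pxInv_pdy_top ht hx,
    hu.pxInv_pdy_bottom ht hx]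
  ring

theorem IsKPSolution.integral_integral_mul_pdt (hL : 0 < L) (hu : IsKPSolution L T α β u)
    (ht : t ∈ Ioo 0 T) :
    ∫ x in 0..L, ∫ y in 0..L, u x y t * pdt u x y t =
      -((1 - α ^ 2) / 2 * (∫ y in 0..L, pdx u 0 y t ^ 2)
        + β * (∫ x in 0..L, u x L t ^ 2)
        + (∫ y in 0..L, pxInv L (fun s y' => pdy u s y' t) 0 y ^ 2) / 2) := by
  have ht' := Ioo_subset_Icc_self ht
  have cu : Continuous ↿u := hu.1.continuous
  have cu_x : Continuous ↿(pdx u) := (contDiff_pdx (m := 0) hu.1 (by norm_num)).continuous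
  have cv := continuous_pxInv_pdy (L := L) (hu.1.of_le (by norm_num)) t
  rw [hu.integral_integral_mul_pdt_eq_flux hL ht,
    integral_congr fun y hy => hu.kpFluxX_right_sub_left ht' (uIcc_of_le hL.le ▸ hy),
    integral_congr fun x hx => hu.kpFluxY_top_sub_bottom ht' (uIcc_of_le hL.le ▸ hx),
    intervalIntegral.integral_add (Continuous.intervalIntegrable (by fun_prop) _ _)
      (Continuous.intervalIntegrable (by fun_prop) _ _),
    intervalIntegral.integral_const_mul, intervalIntegral.integral_const_mul,
    intervalIntegral.integral_div]
  ring

end KP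

theorem kp_energy_decay_general (L T α β : ℝ) (hL : 0 < L)
    (hα1 : |α| < 1) (hβ : 0 < β)
    (u : ℝ → ℝ → ℝ → ℝ) (hu : IsKPSolution L T α β u) :
    AntitoneOn (energy L u) (Set.Icc 0 T) ∧
    ∀ t ∈ Set.Ioo (0:ℝ) T,
      DifferentiableAt ℝ (energy L u) t ∧
      deriv (energy L u) t ≤
        -(min ((1 - α^2)/2) β) *
          ((∫ y in (0:ℝ)..L, (pdx u 0 y t)^2)
            + (∫ x in (0:ℝ)..L, (u x L t)^2)
            + (∫ y in (0:ℝ)..L, (pxInv L (fun s y' => pdy u s y' t) 0 y)^2)) := by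
  have hE := hasDerivAt_energy (L := L) (hu.1.of_le (by norm_num))
  have hC : 0 ≤ min ((1 - α ^ 2) / 2) β := by
    have : α ^ 2 < 1 := by rw [← sq_abs]; nlinarith [abs_nonneg α]
    exact le_min (by linarith) hβ.le
  have hnonneg : ∀ f : ℝ → ℝ, 0 ≤ ∫ s in (0:ℝ)..L, f s ^ 2 := fun f =>
    integral_nonneg hL.le fun s _ => sq_nonneg _
  have hdecay : ∀ t ∈ Ioo 0 T, deriv (energy L u) t ≤
      -(min ((1 - α^2)/2) β) *
          ((∫ y in (0:ℝ)..L, (pdx u 0 y t)^2)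
            + (∫ x in (0:ℝ)..L, (u x L t)^2)
            + (∫ y in (0:ℝ)..L, (pxInv L (fun s y' => pdy u s y' t) 0 y)^2)) := fun t ht => by
    rw [(hE t).deriv, hu.integral_integral_mul_pdt hL ht]
    have hA := hnonneg (pdx u 0 · t)
    have hB := hnonneg (u · L t)
    have hD := hnonneg (pxInv L (fun s y' => pdy u s y' t) 0)
    nlinarith [min_le_left ((1 - α ^ 2) / 2) β, min_le_right ((1 - α ^ 2) / 2) β]
  refine ⟨antitoneOn_of_deriv_nonpos (convex_Icc 0 T)
    (fun t _ => (hE t).continuousAt.continuousWithinAt)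
    (fun t _ => (hE t).differentiableAt.differentiableWithinAt) fun t ht => ?_,
    fun t ht => ⟨(hE t).differentiableAt, hdecay t ht⟩⟩
  rw [interior_Icc] at ht
  refine (hdecay t ht).trans (mul_nonpos_of_nonpos_of_nonneg (neg_nonpos.2 hC) ?_)
  exact add_nonneg (add_nonneg (hnonneg _) (hnonneg _)) (hnonneg _)

/-- The energy of a classical solution of the closed-loop linear KP-II system is
non-increasing on `[0,T]`, and for every `t ∈ (0,T)`,
`E′(t) ≤ -C [∫₀^L u_x(0,y,t)² dy + ∫₀^L u(x,L,t)² dx + ∫₀^L ((∂ₓ⁻¹ u_y)(0,y,t))² dy]`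
with `C = min{(1-α²)/2, β}`. -/
theorem kp_energy_decay (L T α β : ℝ) (hL : 0 < L) (hT : 0 < T)
    (hα0 : 0 < |α|) (hα1 : |α| < 1) (hβ : 0 < β)
    (u : ℝ → ℝ → ℝ → ℝ) (hu : IsKPSolution L T α β u) :
    AntitoneOn (energy L u) (Set.Icc 0 T) ∧
    ∀ t ∈ Set.Ioo (0:ℝ) T,
      DifferentiableAt ℝ (energy L u) t ∧
      deriv (energy L u) t ≤
        -(min ((1 - α^2)/2) β) *
          ((∫ y in (0:ℝ)..L, (pdx u 0 y t)^2)
            + (∫ x in (0:ℝ)..L, (u x L t)^2)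
            + (∫ y in (0:ℝ)..L, (pxInv L (fun s y' => pdy u s y' t) 0 y)^2)) :=
  kp_energy_decay_general L T α β hL hα1 hβ u hu

end
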